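/- Let L : ℝ^n × (ℝ^m →ₗ[ℝ] ℝ^n) → ℝ be smooth and satisfy the infinitesimal homogeneity condition Σ_{a=1}^n u_i^a (∂L/∂u_j^a)(x,u) = δ_i^j L(x,u) for all i, j and all (x,u), where u_i^a is the a-th component of u(e_i). Then for all (x,u): Σ_{a₁,…,a_m = 1}^n (∂^m L / ∂u_1^{a₁} ∂u_2^{a₂} ⋯ ∂u_m^{a_m})(x, u) · det( (u_j^{a_i})_{1 ≤ i,j ≤ m} ) = m! · L(x, u), where the determinant is of the m×m matrix whose (i,j) entry is u_j^{a_i} and the mixed partial derivative is taken in the fibre coordinates u_1^{a₁}, …, u_m^{a_m}. -/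

import Mathlib

/-!
Homogeneity says that the derivative of `L` along the vertical vector `(0, u ∘ B)` is
`tr B • L`. Differentiating this along `(0, u ∘ A₀)`, and remembering that the directions
`u ∘ Aₜ` move with `u`, shows inductively that the `k`-th vertical derivative of `L` along
`(0, u ∘ A₁), …, (0, u ∘ Aₖ)` is `c_k(A) • L` for universal coefficients `c_k` built from the
trace and composition of endomorphisms of `ℝ^m`. Contracting with `det (u_j^{a_i})` turns the
left-hand side into the alternating sum over `σ` of these derivatives along the matrix units
`E_{σ j, j}`, and an induction by Laplace expansion shows that the alternating sum of
`c_m(E_{σ j, j})` is `m!`.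
-/

/-- The basis element of the fibre of `T_mℝ^n` corresponding to the fibre
coordinate `u_j^a`: the linear map `ℝ^m → ℝ^n` sending `v ↦ v_j • e_a`. -/
noncomputable def fibreDir (m n : ℕ) (j : Fin m) (a : Fin n) :
    (Fin m → ℝ) →L[ℝ] (Fin n → ℝ) :=
  (ContinuousLinearMap.proj j : (Fin m → ℝ) →L[ℝ] ℝ).smulRight (Pi.single a 1)

open Equiv Finset

section Combinatorics

variable {R S ι : Type*} [Ring R] [CommRing S]

/-- The coefficient in `D^k f u (u ∘ A₁, …, u ∘ Aₖ) = eulerCoeff τ k A • f u` when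
`D f u (u ∘ B) = τ B • f u`; the sum comes from differentiating the directions `u ∘ Aₜ` too. -/
def eulerCoeff (τ : R → S) : (k : ℕ) → (Fin k → R) → S
  | 0, _ => 1
  | k + 1, A => τ (A 0) * eulerCoeff τ k (Fin.tail A) -
      ∑ t : Fin k, eulerCoeff τ k (Function.update (Fin.tail A) t (A 0 * Fin.tail A t))

theorem eulerCoeff_eq_zero_of_apply_eq_zero {τ : R → S} (hτ : τ 0 = 0) :
    ∀ {k : ℕ} {A : Fin k → R} {t : Fin k}, A t = 0 → eulerCoeff τ k A = 0
  | k + 1, A, t, hA => by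
    rw [eulerCoeff]
    induction t using Fin.cases with
    | zero =>
      rw [hA, hτ, zero_mul, zero_sub, neg_eq_zero]
      exact sum_eq_zero fun s _ ↦ eulerCoeff_eq_zero_of_apply_eq_zero hτ (t := s) (by simp)
    | succ s =>
      have hs : Fin.tail A s = 0 := hA
      rw [eulerCoeff_eq_zero_of_apply_eq_zero hτ hs, mul_zero, zero_sub, neg_eq_zero]
      refine sum_eq_zero fun t' _ ↦ eulerCoeff_eq_zero_of_apply_eq_zero hτ (t := s) ?_
      rcases eq_or_ne s t' with rfl | hst
      · simp [hs]
      · rw [Function.update_of_ne hst, hs]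

def alternation {k : ℕ} (g : (Fin k → ι) → S) (p : Fin k → ι) : S :=
  ∑ σ : Perm (Fin k), Perm.sign σ • g (p ∘ σ)

theorem alternation_comp_perm {k : ℕ} (g : (Fin k → ι) → S) (p : Fin k → ι) (π : Perm (Fin k)) :
    alternation (fun r ↦ g (r ∘ π)) p = Perm.sign π • alternation g p := by
  rw [alternation, ← Equiv.sum_comp (Equiv.mulRight π⁻¹), alternation, smul_sum]
  refine sum_congr rfl fun σ _ ↦ ?_
  simp [Perm.sign_mul, mul_smul, Function.comp_assoc, mul_comm (Perm.sign σ)]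

/-- Laplace expansion along the first slot. -/
theorem alternation_mul_succ {k : ℕ} (a : ι → S) (b : (Fin k → ι) → S) (p : Fin (k + 1) → ι) :
    alternation (fun r ↦ a (r 0) * b (r ∘ Fin.succ)) p =
      ∑ i, Perm.sign (swap 0 i) • (a (p i) * alternation b (p ∘ swap 0 i ∘ Fin.succ)) := by
  rw [alternation, ← Equiv.sum_comp Perm.decomposeFin.symm, Fintype.sum_prod_type]
  refine sum_congr rfl fun i _ ↦ ?_
  rw [alternation, mul_sum, smul_sum]
  refine sum_congr rfl fun π _ ↦ ?_
  have hsucc : p ∘ Perm.decomposeFin.symm (i, π) ∘ Fin.succ = p ∘ swap 0 i ∘ Fin.succ ∘ π := by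
    ext s
    simp
  simp only [Function.comp_apply, Perm.decomposeFin_symm_apply_zero, Function.comp_assoc, hsucc,
    Perm.decomposeFin.symm_sign, Perm.sign_swap', mul_smul, mul_smul_comm]
  simp only [eq_comm (a := (0 : Fin (k + 1)))]

theorem alternation_prod_ite_eq_id {k : ℕ} :
    alternation (fun r : Fin k → Fin k ↦ ∏ t, if r t = t then (1 : S) else 0) id = 1 := by
  have h := Matrix.det_one (n := Fin k) (R := S)
  rw [Matrix.det_apply] at h
  simpa [alternation, Matrix.one_apply] using h

structure IsTracedMatrixUnits [DecidableEq ι] (τ : R → S) (e : ι → ι → R) : Prop where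
  mul_eq : ∀ a b c d, e a b * e c d = if b = c then e a d else 0
  trace_eq : ∀ a b, τ (e a b) = if a = b then 1 else 0
  trace_zero : τ 0 = 0

namespace IsTracedMatrixUnits

variable [DecidableEq ι] {τ : R → S} {e : ι → ι → R}

theorem alternation_eulerCoeff_succ (h : IsTracedMatrixUnits τ e) {k : ℕ}
    (p q : Fin (k + 1) → ι) :
    alternation (fun r ↦ eulerCoeff τ (k + 1) (fun t ↦ e (r t) (q t))) p =
      (k + 1 : S) * alternation (fun r ↦ (if r 0 = q 0 then 1 else 0) *
        eulerCoeff τ k (fun s ↦ e (r s.succ) (q s.succ))) p := by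
  set g : (Fin (k + 1) → ι) → S := fun r ↦ (if r 0 = q 0 then 1 else 0) *
    eulerCoeff τ k (fun s ↦ e (r s.succ) (q s.succ)) with hg
  have expand (r : Fin (k + 1) → ι) : eulerCoeff τ (k + 1) (fun t ↦ e (r t) (q t)) =
      g r - ∑ t : Fin k, g (r ∘ swap 0 t.succ) := by
    rw [eulerCoeff, h.trace_eq]
    congr 1
    refine sum_congr rfl fun t _ ↦ ?_
    simp only [Fin.tail, h.mul_eq, hg, Function.comp_apply, swap_apply_left]
    rcases eq_or_ne (q 0) (r t.succ) with hq | hq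
    · rw [if_pos hq, if_pos hq.symm, one_mul]
      congr 1
      funext s
      rcases eq_or_ne s t with rfl | hst
      · simp
      · simp [hst, Fin.tail,
          swap_apply_of_ne_of_ne (Fin.succ_ne_zero s) (Fin.succ_inj.not.mpr hst)]
    · rw [if_neg hq, if_neg (Ne.symm hq), zero_mul]
      exact eulerCoeff_eq_zero_of_apply_eq_zero h.trace_zero (Function.update_self _ _ _)
  calc alternation (fun r ↦ eulerCoeff τ (k + 1) (fun t ↦ e (r t) (q t))) p
      = alternation g p - ∑ t : Fin k, alternation (fun r ↦ g (r ∘ swap 0 t.succ)) p := by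
        simp only [alternation, expand, smul_sub, sum_sub_distrib, smul_sum]
        rw [sum_comm]
    _ = alternation g p - ∑ t : Fin k, Perm.sign (swap 0 t.succ) • alternation g p := by
        simp only [alternation_comp_perm]
    _ = (k + 1 : S) * alternation g p := by
        simp [Perm.sign_swap (Fin.succ_ne_zero _).symm]
        ring

theorem alternation_eulerCoeff (h : IsTracedMatrixUnits τ e) :
    ∀ {k : ℕ} (p q : Fin k → ι),
      alternation (fun r ↦ eulerCoeff τ k (fun t ↦ e (r t) (q t))) p =
        k.factorial * alternation (fun r ↦ ∏ t, if r t = q t then (1 : S) else 0) p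
  | 0, p, q => by simp [alternation, eulerCoeff]
  | k + 1, p, q => by
    have IH (p' : Fin k → ι) := h.alternation_eulerCoeff p' (fun s ↦ q s.succ)
    calc alternation (fun r ↦ eulerCoeff τ (k + 1) (fun t ↦ e (r t) (q t))) p
        = (k + 1) * ∑ i, Perm.sign (swap 0 i) • ((if p i = q 0 then 1 else 0) *
            alternation (fun r ↦ eulerCoeff τ k (fun s ↦ e (r s) (q s.succ)))
              (p ∘ swap 0 i ∘ Fin.succ)) := by
          rw [h.alternation_eulerCoeff_succ,
            ← alternation_mul_succ (fun i ↦ if i = q 0 then 1 else 0)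
              (fun r ↦ eulerCoeff τ k (fun s ↦ e (r s) (q s.succ)))]
          rfl
      _ = (k + 1) * (k.factorial * ∑ i, Perm.sign (swap 0 i) • ((if p i = q 0 then 1 else 0) *
            alternation (fun r ↦ ∏ s, if r s = q s.succ then (1 : S) else 0)
              (p ∘ swap 0 i ∘ Fin.succ))) := by
          simp only [IH, mul_sum, mul_smul_comm, mul_left_comm]
      _ = (k + 1).factorial * alternation (fun r ↦ ∏ t, if r t = q t then (1 : S) else 0) p := by
          rw [← alternation_mul_succ (fun i ↦ if i = q 0 then 1 else 0)
            (fun r ↦ ∏ s, if r s = q s.succ then (1 : S) else 0), Nat.factorial_succ]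
          simp only [Fin.prod_univ_succ, Function.comp_apply]
          push_cast
          ring

end IsTracedMatrixUnits

end Combinatorics

section Analysis

variable {𝕜 F : Type*} [NontriviallyNormedField 𝕜] [NormedAddCommGroup F] [NormedSpace 𝕜 F]

theorem ContinuousMultilinearMap.apply_sum_smul {ι κ M : Type*} [Fintype ι] [DecidableEq ι]
    [Fintype κ] [NormedAddCommGroup M] [NormedSpace 𝕜 M]
    (Φ : ContinuousMultilinearMap 𝕜 (fun _ : ι ↦ M) 𝕜) (c : ι → κ → 𝕜) (v : ι → κ → M) :
    Φ (fun j ↦ ∑ b, c j b • v j b) = ∑ a : ι → κ, Φ (fun j ↦ v j (a j)) * ∏ j, c j (a j) := by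
  simp only [Φ.map_sum, Φ.map_smul_univ, smul_eq_mul, mul_comm]

theorem iteratedFDeriv_comp_prodMk_right {E U : Type*} [NormedAddCommGroup E] [NormedSpace 𝕜 E]
    [NormedAddCommGroup U] [NormedSpace 𝕜 U] {L : E × U → F} {n : WithTop ℕ∞}
    (hL : ContDiff 𝕜 n L) (x : E) {k : ℕ} (hk : k ≤ n) (u : U) (h : Fin k → U) :
    iteratedFDeriv 𝕜 k (fun y ↦ L (x, y)) u h =
      iteratedFDeriv 𝕜 k L (x, u) (fun t ↦ (0, h t)) := by
  have hcomp : (fun y ↦ L (x, y)) = (fun z ↦ L ((x, 0) + z)) ∘ ContinuousLinearMap.inr 𝕜 E U := by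
    ext y
    simp
  rw [hcomp, ContinuousLinearMap.iteratedFDeriv_comp_right _ (f := fun z ↦ L ((x, 0) + z))
    (hL.comp (contDiff_const.add contDiff_id)) _ hk, iteratedFDeriv_comp_add_left]
  simp

variable {V W : Type*} [NormedAddCommGroup V] [NormedSpace 𝕜 V] [NormedAddCommGroup W]
  [NormedSpace 𝕜 W]

theorem iteratedFDeriv_apply_comp_eq_eulerCoeff_smul {τ : (V →L[𝕜] V) → 𝕜}
    {f : (V →L[𝕜] W) → F} (hhom : ∀ u B, fderiv 𝕜 f u (u.comp B) = τ B • f u) :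
    ∀ {k : ℕ}, ContDiff 𝕜 k f → ∀ (A : Fin k → V →L[𝕜] V) (u : V →L[𝕜] W),
      iteratedFDeriv 𝕜 k f u (fun t ↦ u.comp (A t)) = eulerCoeff τ k A • f u
  | 0, _, A, u => by simp [eulerCoeff]
  | k + 1, hf, A, u => by
    have IH (B : Fin k → V →L[𝕜] V) (y : V →L[𝕜] W) :=
      iteratedFDeriv_apply_comp_eq_eulerCoeff_smul hhom (hf.of_le (by norm_cast; omega)) B y
    -- differentiate both sides of `IH (Fin.tail A)` at `u` and evaluate at `u ∘ A 0`
    have hD := ((hf.differentiable_iteratedFDeriv (by norm_cast; omega)) u).hasFDerivAt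
      |>.continuousMultilinearMap_apply
        fun t ↦ ((ContinuousLinearMap.compL 𝕜 V V W).flip (Fin.tail A t)).hasFDerivAt
    have hD' : HasFDerivAt (fun y ↦ iteratedFDeriv 𝕜 k f y (fun t ↦ y.comp (Fin.tail A t)))
        (eulerCoeff τ k (Fin.tail A) • fderiv 𝕜 f u) u := by
      simp only [IH]
      exact ((hf.differentiable (by simp)) u).hasFDerivAt.const_smul _
    have key := congr($(hD.unique hD') (u.comp (A 0)))
    have hupdate (t : Fin k) : Function.update (fun s ↦ u.comp (Fin.tail A s)) t
        ((u.comp (A 0)).comp (Fin.tail A t)) =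
          fun s ↦ u.comp (Function.update (Fin.tail A) t (A 0 * Fin.tail A t) s) := by
      ext1 s
      rw [Function.apply_update (fun _ B ↦ u.comp B), ContinuousLinearMap.mul_def,
        ContinuousLinearMap.comp_assoc]
    simp only [ContinuousLinearMap.flip_apply, ContinuousLinearMap.compL_apply, add_apply,
      ContinuousLinearMap.comp_apply, ContinuousMultilinearMap.apply_apply, _root_.sum_apply,
      ContinuousMultilinearMap.toContinuousLinearMap_apply, hupdate, IH, smul_apply, hhom] at key
    rw [iteratedFDeriv_succ_apply_left, eulerCoeff, sub_smul, sum_smul, mul_comm, mul_smul, ← key,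
      add_sub_cancel_right]
    rfl

end Analysis

section Coordinates

variable {m n : ℕ}

theorem fibreDir_apply (j : Fin m) (a : Fin n) (v : Fin m → ℝ) :
    fibreDir m n j a v = v j • Pi.single a 1 :=
  rfl

theorem fibreDir_mul_fibreDir (a b c d : Fin m) :
    fibreDir m m b a * fibreDir m m d c = if b = c then fibreDir m m d a else 0 := by
  ext v i
  split_ifs with h <;> simp [fibreDir_apply, h, Pi.single_apply]

theorem LinearMap.trace_pi_eq_sum (B : (Fin m → ℝ) →ₗ[ℝ] (Fin m → ℝ)) :
    LinearMap.trace ℝ (Fin m → ℝ) B = ∑ i, B (Pi.single i 1) i := by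
  rw [LinearMap.trace_eq_matrix_trace ℝ (Pi.basisFun ℝ (Fin m)), LinearMap.toMatrix_eq_toMatrix']
  simp [Matrix.trace, LinearMap.toMatrix'_apply]

theorem isTracedMatrixUnits_fibreDir :
    IsTracedMatrixUnits
      (fun B : (Fin m → ℝ) →L[ℝ] (Fin m → ℝ) ↦ LinearMap.trace ℝ _ B.toLinearMap)
      (fun i j ↦ fibreDir m m j i) where
  mul_eq a b c d := fibreDir_mul_fibreDir a b c d
  trace_eq a b := by simp [LinearMap.trace_pi_eq_sum, fibreDir_apply, Pi.single_apply, eq_comm]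
  trace_zero := by simp

theorem eq_sum_smul_fibreDir (w : (Fin m → ℝ) →L[ℝ] (Fin n → ℝ)) :
    w = ∑ j, ∑ a, w (Pi.single j 1) a • fibreDir m n j a := by
  refine ContinuousLinearMap.coe_injective (LinearMap.pi_ext fun j x ↦ ?_)
  ext b
  rw [show (Pi.single j x : Fin m → ℝ) = x • Pi.single j 1 by
    rw [← Pi.single_smul, smul_eq_mul, mul_one]]
  simp [fibreDir_apply, Pi.single_apply, mul_comm]

theorem comp_fibreDir (u : (Fin m → ℝ) →L[ℝ] (Fin n → ℝ)) (i j : Fin m) :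
    u.comp (fibreDir m m j i) = ∑ a, u (Pi.single i 1) a • fibreDir m n j a := by
  ext v b
  simp [fibreDir_apply, Pi.single_apply, mul_comm]

theorem fderiv_apply_comp_eq_trace_mul {L : ((Fin n → ℝ) × ((Fin m → ℝ) →L[ℝ] (Fin n → ℝ))) → ℝ}
    (hhom : ∀ (x : Fin n → ℝ) (u : (Fin m → ℝ) →L[ℝ] (Fin n → ℝ)) (i j : Fin m),
      ∑ a, u (Pi.single i 1) a * fderiv ℝ L (x, u) (0, fibreDir m n j a) =
        (if i = j then (1 : ℝ) else 0) * L (x, u))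
    (x : Fin n → ℝ) (u : (Fin m → ℝ) →L[ℝ] (Fin n → ℝ)) (B : (Fin m → ℝ) →L[ℝ] (Fin m → ℝ)) :
    fderiv ℝ L (x, u) (0, u.comp B) = LinearMap.trace ℝ _ B.toLinearMap * L (x, u) := by
  set D := (fderiv ℝ L (x, u)).comp (ContinuousLinearMap.inr ℝ _ _)
  have hunit (i j : Fin m) :
      D (u.comp (fibreDir m m j i)) = (if i = j then 1 else 0) * L (x, u) := by
    rw [comp_fibreDir, map_sum]
    simpa [D] using hhom x u i j
  change D (u.comp B) = _
  conv_lhs => rw [eq_sum_smul_fibreDir B]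
  simp [ContinuousLinearMap.comp_finsetSum, hunit, LinearMap.trace_pi_eq_sum, sum_mul]

theorem sum_apply_fibreDir_mul_det {E : Type*} [NormedAddCommGroup E] [NormedSpace ℝ E]
    (Φ : ContinuousMultilinearMap ℝ (fun _ : Fin m ↦ E × ((Fin m → ℝ) →L[ℝ] (Fin n → ℝ))) ℝ)
    (u : (Fin m → ℝ) →L[ℝ] (Fin n → ℝ)) :
    ∑ a : Fin m → Fin n, Φ (fun j ↦ (0, fibreDir m n j (a j))) *
        (Matrix.of fun i j ↦ u (Pi.single j 1) (a i)).det =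
      ∑ σ : Perm (Fin m), Perm.sign σ • Φ (fun j ↦ (0, u.comp (fibreDir m m j (σ j)))) := by
  have hcol (σ : Perm (Fin m)) : (fun j ↦ ((0 : E), u.comp (fibreDir m m j (σ j)))) =
      fun j ↦ ∑ a, u (Pi.single (σ j) 1) a • ((0 : E), fibreDir m n j a) := by
    ext1 j
    rw [comp_fibreDir]
    ext <;> simp [Prod.fst_sum, Prod.snd_sum]
  have hdet (a : Fin m → Fin n) : (Matrix.of fun i j ↦ u (Pi.single j 1) (a i)).det =
      ∑ σ : Perm (Fin m), Perm.sign σ • ∏ j, u (Pi.single (σ j) 1) (a j) := by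
    rw [← Matrix.det_transpose, Matrix.det_apply]
    rfl
  simp_rw [hcol, Φ.apply_sum_smul, hdet, mul_sum, smul_sum, mul_smul_comm]
  rw [sum_comm]

end Coordinates

/-- Iterated Euler identity for a homogeneous Lagrangian: if
the smooth `L` on `T_mℝ^n ≅ ℝ^n × (ℝ^m →L[ℝ] ℝ^n)` satisfies the infinitesimal
homogeneity condition `Σ_a u_i^a ∂L/∂u_j^a = δ_i^j L`, then for all `(x, u)`
`Σ_{a₁,…,a_m} (∂^m L / ∂u_1^{a₁} ⋯ ∂u_m^{a_m})(x,u) · det(u_j^{a_i}) = m! L(x,u)`,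
where `u_i^a` is the `a`-th component of `u e_i`, the mixed `m`-th partial
derivative is taken in the fibre coordinates `u_1^{a₁}, …, u_m^{a_m}` and the
determinant is of the `m × m` matrix whose `(i,j)` entry is `u_j^{a_i}`. -/
theorem fundamental_equivalent_identity (m n : ℕ)
    (L : ((Fin n → ℝ) × ((Fin m → ℝ) →L[ℝ] (Fin n → ℝ))) → ℝ)
    (hL : ContDiff ℝ (⊤ : ℕ∞) L)
    (hhom : ∀ (x : Fin n → ℝ) (u : (Fin m → ℝ) →L[ℝ] (Fin n → ℝ)) (i j : Fin m),
      ∑ a, u (Pi.single i 1) a * fderiv ℝ L (x, u) (0, fibreDir m n j a) =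
        (if i = j then (1 : ℝ) else 0) * L (x, u)) :
    ∀ (x : Fin n → ℝ) (u : (Fin m → ℝ) →L[ℝ] (Fin n → ℝ)),
      ∑ a : Fin m → Fin n,
        (iteratedFDeriv ℝ m L (x, u)
            (fun j => ((0 : Fin n → ℝ), fibreDir m n j (a j)))) *
          Matrix.det (Matrix.of fun i j => u (Pi.single j 1) (a i)) =
        (m.factorial : ℝ) * L (x, u) := by
  intro x u
  have hk (k : ℕ) : (k : WithTop ℕ∞) ≤ ((⊤ : ℕ∞) : WithTop ℕ∞) := by exact_mod_cast le_top
  have hEuler (y : (Fin m → ℝ) →L[ℝ] (Fin n → ℝ)) (B : (Fin m → ℝ) →L[ℝ] (Fin m → ℝ)) :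
      fderiv ℝ (fun y ↦ L (x, y)) y (y.comp B) = LinearMap.trace ℝ _ B.toLinearMap • L (x, y) := by
    have h1 := iteratedFDeriv_comp_prodMk_right hL x (hk 1) y (fun _ ↦ y.comp B)
    simp only [iteratedFDeriv_one_apply] at h1
    rw [h1, fderiv_apply_comp_eq_trace_mul hhom, smul_eq_mul]
  calc _ = ∑ σ : Perm (Fin m), Perm.sign σ •
        iteratedFDeriv ℝ m L (x, u) (fun j ↦ (0, u.comp (fibreDir m m j (σ j)))) :=
        sum_apply_fibreDir_mul_det _ u
    _ = alternation (fun r ↦ eulerCoeff (fun B : (Fin m → ℝ) →L[ℝ] (Fin m → ℝ) ↦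
          LinearMap.trace ℝ _ B.toLinearMap) m (fun j ↦ fibreDir m m j (r j))) id * L (x, u) := by
        simp only [← iteratedFDeriv_comp_prodMk_right hL x (hk m),
          iteratedFDeriv_apply_comp_eq_eulerCoeff_smul hEuler (hL.comp
            (contDiff_const.prodMk contDiff_id) |>.of_le (hk m)), alternation, sum_mul,
          smul_mul_assoc, smul_eq_mul]
        rfl
    _ = m.factorial * L (x, u) := by
        rw [isTracedMatrixUnits_fibreDir.alternation_eulerCoeff (q := fun t ↦ t),
          alternation_prod_ite_eq_id, mul_one]
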